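/- Let G be the presented group on generators α, α′, γ, γ′, δ, δ′ with the relations R₉ together with the additional relation αγ′ = δ′α. Then G is abelian. -/

import Mathlib

/-- The relations of the reduced braid group `B̄₃`:
`σ₁σ₂σ₁ = σ₂σ₁σ₂` and `(σ₁σ₂)³ = 1`. -/
def bbar3Rels : Set (FreeGroup (Fin 2)) :=
  { FreeGroup.of 0 * FreeGroup.of 1 * FreeGroup.of 0 *
      (FreeGroup.of 1 * FreeGroup.of 0 * FreeGroup.of 1)⁻¹,
    (FreeGroup.of 0 * FreeGroup.of 1) ^ 3 }

/-- The reduced braid group `B̄₃ = ⟨σ₁, σ₂ ∣ σ₁σ₂σ₁ = σ₂σ₁σ₂, (σ₁σ₂)³ = 1⟩`. -/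
abbrev Bbar3 : Type := PresentedGroup bbar3Rels

/-- The generator `σ₁` of `B̄₃`. -/
def σ1 : Bbar3 := PresentedGroup.of 0

/-- The generator `σ₂` of `B̄₃`. -/
def σ2 : Bbar3 := PresentedGroup.of 1

namespace Stmt

def a : FreeGroup (Fin 6) := FreeGroup.of 0
def a' : FreeGroup (Fin 6) := FreeGroup.of 1
def c : FreeGroup (Fin 6) := FreeGroup.of 2
def c' : FreeGroup (Fin 6) := FreeGroup.of 3
def d : FreeGroup (Fin 6) := FreeGroup.of 4
def d' : FreeGroup (Fin 6) := FreeGroup.of 5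

/-- The set of relators. -/
def rels : Set (FreeGroup (Fin 6)) :=
  { a * a' * a * (a' * a * a')⁻¹,
    a * a' * a⁻¹ * c⁻¹,
    a' * a * a'⁻¹ * c'⁻¹,
    a⁻¹ * d * a * (a'⁻¹ * d' * a')⁻¹,
    d * c' * (c * d)⁻¹,
    c * d * (c' * d')⁻¹,
    c' * d' * (d' * c)⁻¹,
    c * d * a * c' * d' * a',
    a * c' * (d' * a)⁻¹ }

end Stmt

namespace Stmt16Aux

open Stmt

abbrev π : FreeGroup (Fin 6) →* PresentedGroup Stmt.rels := PresentedGroup.mk Stmt.rels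

lemma rel_one {r : FreeGroup (Fin 6)} (h : r ∈ Stmt.rels) : π r = 1 := by
  exact (QuotientGroup.eq_one_iff r).mpr (Subgroup.subset_normalClosure h)

noncomputable def A : PresentedGroup Stmt.rels := π Stmt.a
noncomputable def B : PresentedGroup Stmt.rels := π Stmt.a'
noncomputable def C : PresentedGroup Stmt.rels := π Stmt.c
noncomputable def C' : PresentedGroup Stmt.rels := π Stmt.c'
noncomputable def D : PresentedGroup Stmt.rels := π Stmt.d
noncomputable def D' : PresentedGroup Stmt.rels := π Stmt.d'

lemma h1 : A * B * A = B * A * B := by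
  have := rel_one (r := a * a' * a * (a' * a * a')⁻¹) (by simp [Stmt.rels])
  simp only [map_mul, map_inv] at this
  have : A * B * A * (B * A * B)⁻¹ = 1 := this
  group at this ⊢
  exact mul_inv_eq_one.mp this

lemma h2 : A * B * A⁻¹ = C := by
  have := rel_one (r := a * a' * a⁻¹ * c⁻¹) (by simp [Stmt.rels])
  simp only [map_mul, map_inv] at this
  have : A * B * A⁻¹ * C⁻¹ = 1 := this
  exact mul_inv_eq_one.mp this

lemma h3 : B * A * B⁻¹ = C' := by
  have := rel_one (r := a' * a * a'⁻¹ * c'⁻¹) (by simp [Stmt.rels])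
  simp only [map_mul, map_inv] at this
  have : B * A * B⁻¹ * C'⁻¹ = 1 := this
  exact mul_inv_eq_one.mp this

lemma h6 : C * D = C' * D' := by
  have := rel_one (r := c * d * (c' * d')⁻¹) (by simp [Stmt.rels])
  simp only [map_mul, map_inv] at this
  have : C * D * (C' * D')⁻¹ = 1 := this
  exact mul_inv_eq_one.mp this

lemma h7 : C' * D' = D' * C := by
  have := rel_one (r := c' * d' * (d' * c)⁻¹) (by simp [Stmt.rels])
  simp only [map_mul, map_inv] at this
  have : C' * D' * (D' * C)⁻¹ = 1 := this
  exact mul_inv_eq_one.mp this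

lemma h9 : A * C' = D' * A := by
  have := rel_one (r := a * c' * (d' * a)⁻¹) (by simp [Stmt.rels])
  simp only [map_mul, map_inv] at this
  have : A * C' * (D' * A)⁻¹ = 1 := this
  exact mul_inv_eq_one.mp this

lemma hD' : D' = B := by
  have hd : D' = A * C' * A⁻¹ := by rw [h9]; group
  rw [hd, ← h3]
  have : A * (B * A * B⁻¹) * A⁻¹ = (A * B * A) * B⁻¹ * A⁻¹ := by group
  rw [this, h1]; group

lemma hBA : B = A := by
  have := h7
  rw [hD', ← h3, ← h2] at this
  -- (B*A*B⁻¹) * B = B * (A*B*A⁻¹)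
  have h' : B * A = B * A * B * A⁻¹ := by
    calc B * A = B * A * B⁻¹ * B := by group
    _ = B * (A * B * A⁻¹) := this
    _ = B * A * B * A⁻¹ := by group
  have : (1 : PresentedGroup Stmt.rels) = B * A⁻¹ := by
    have := mul_left_cancel (a := B * A) (by calc B * A * 1 = B * A := by group
      _ = B * A * B * A⁻¹ := h'
      _ = B * A * (B * A⁻¹) := by group)
    exact this
  calc B = B * A⁻¹ * A := by group
  _ = 1 * A := by rw [← this]
  _ = A := by group

lemma hC : C = A := by rw [← h2, hBA]; group
lemma hC' : C' = A := by rw [← h3, hBA]; group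
lemma hD'A : D' = A := by rw [hD', hBA]
lemma hD : D = A := by
  have := h6
  rw [hC, hC', hD'A] at this
  exact mul_left_cancel this

lemma gen_eq : ∀ i : Fin 6, π (FreeGroup.of i) = A := by
  intro i
  fin_cases i
  · rfl
  · exact hBA
  · exact hC
  · exact hC'
  · exact hD
  · exact hD'A

lemma pow_form : ∀ x : PresentedGroup Stmt.rels, ∃ n : ℤ, x = A ^ n := by
  intro x
  induction x with
  | H z =>
    induction z using FreeGroup.induction_on with
    | C1 => exact ⟨0, by simp⟩
    | of i => exact ⟨1, by simpa using gen_eq i⟩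
    | inv_of i _ =>
      refine ⟨-1, ?_⟩
      show π (FreeGroup.of i)⁻¹ = A ^ (-1 : ℤ)
      rw [map_inv, gen_eq i]; group
    | mul u v hu hv =>
      obtain ⟨m, hm⟩ := hu
      obtain ⟨n, hn⟩ := hv
      refine ⟨m + n, ?_⟩
      rw [map_mul, hm, hn, zpow_add]

end Stmt16Aux

/-- Adding the relation `αγ' = δ'α` to the relations R₉, the resulting group is abelian. -/
theorem stmt16 : ∀ x y : PresentedGroup Stmt.rels, x * y = y * x := by
  intro x y
  obtain ⟨m, hm⟩ := Stmt16Aux.pow_form x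
  obtain ⟨n, hn⟩ := Stmt16Aux.pow_form y
  rw [hm, hn, ← zpow_add, ← zpow_add, add_comm]
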